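/- arXiv:2403.01820 — 2 statements merged into one kernel-verified Lean document; each statement's English description precedes it below -/
import Mathlib

section
/- Suppose f is continuously differentiable, satisfies the scaled 1D LRTE on τ × D × [-1,1], and satisfies the periodic boundary condition f(t, x_L, μ) = f(t, x_R, μ) for all t ∈ τ and μ ∈ [-1,1]. Then the mass conservation law holds: for every t ∈ τ, (d/dt) ∫_{x_L}^{x_R} ρ(t,x) dx + ∫_{x_L}^{x_R} α(x) ρ(t,x) dx − ∫_{x_L}^{x_R} G(x) dx = 0. -/
/-! Averaging the equation over `μ ∈ [-1,1]` kills the scattering term, since `⟨ρ - f⟩ = 0`, and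
leaves `ε² ∂ₜρ + ε ∂ₓ⟨μ f⟩ = ε² (G - α ρ)`. Integrated over `D`, the flux term contributes
`⟨μ f⟩(x_R) - ⟨μ f⟩(x_L)`, which vanishes by periodicity. Both derivatives pass under the integral
signs because `f` is `C¹`, so its partial derivatives are bounded on compact boxes. -/

open MeasureTheory Real intervalIntegral

/-- The partial derivative `∂_t f` of `f = f(t,x,μ)` in the time variable. -/
noncomputable def pt (f : ℝ → ℝ → ℝ → ℝ) (t x μ : ℝ) : ℝ := deriv (fun s => f s x μ) t

/-- The partial derivative `∂_x f` of `f = f(t,x,μ)` in the space variable. -/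
noncomputable def px (f : ℝ → ℝ → ℝ → ℝ) (t x μ : ℝ) : ℝ := deriv (fun y => f t y μ) x

/-- The angular average `⟨f⟩(t,x) = (1/2) ∫_{-1}^{1} f(t,x,μ) dμ`. -/
noncomputable def avg (f : ℝ → ℝ → ℝ → ℝ) (t x : ℝ) : ℝ :=
  (1 / 2) * ∫ μ in (-1 : ℝ)..1, f t x μ

/-- `f` satisfies the scaled 1D linear radiative transfer equation
`ε² ∂_t f + ε μ ∂_x f = σ(x)(⟨f⟩ − f) − ε² α(x) f + ε² G(x)`
on `(0,T) × (x_L,x_R) × [-1,1]`. -/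
def SolvesLRTE (ε T xL xR : ℝ) (σ α G : ℝ → ℝ) (f : ℝ → ℝ → ℝ → ℝ) : Prop :=
  ∀ t ∈ Set.Ioo (0 : ℝ) T, ∀ x ∈ Set.Ioo xL xR, ∀ μ ∈ Set.Icc (-1 : ℝ) 1,
    ε ^ 2 * pt f t x μ + ε * μ * px f t x μ =
      σ x * (avg f t x - f t x μ) - ε ^ 2 * α x * f t x μ + ε ^ 2 * G x

theorem hasDerivAt_intervalIntegral_of_continuous {E : Type*} [NormedAddCommGroup E]
    [NormedSpace ℝ E] {F F' : ℝ → ℝ → E} (hF : Continuous F.uncurry)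
    (hF' : Continuous F'.uncurry) (hderiv : ∀ s y, HasDerivAt (F · y) (F' s y) s)
    (a b t : ℝ) :
    HasDerivAt (fun s => ∫ y in a..b, F s y) (∫ y in a..b, F' t y) t := by
  have hK : IsCompact (Metric.closedBall t 1 ×ˢ Set.uIcc a b) :=
    (isCompact_closedBall t 1).prod isCompact_uIcc
  obtain ⟨M, hM⟩ := hK.exists_bound_of_continuousOn hF'.continuousOn
  exact (intervalIntegral.hasDerivAt_integral_of_dominated_loc_of_deriv_le (bound := fun _ => M)
    (Metric.closedBall_mem_nhds t one_pos)
    (.of_forall fun s => (hF.comp (Continuous.prodMk_right s)).aestronglyMeasurable)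
    ((hF.comp (Continuous.prodMk_right t)).intervalIntegrable a b)
    (hF'.comp (Continuous.prodMk_right t)).aestronglyMeasurable
    (.of_forall fun y hy s hs => hM (s, y) ⟨hs, Set.uIoc_subset_uIcc hy⟩)
    intervalIntegrable_const (.of_forall fun y _ s _ => hderiv s y)).2

section PartialDerivatives

variable {f : ℝ → ℝ → ℝ → ℝ}

theorem pt_eq_fderiv (hf : ContDiff ℝ 1 (fun p : ℝ × ℝ × ℝ => f p.1 p.2.1 p.2.2)) (t x μ : ℝ) :
    pt f t x μ = fderiv ℝ (fun p : ℝ × ℝ × ℝ => f p.1 p.2.1 p.2.2) (t, x, μ) (1, 0, 0) :=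
  ((hf.differentiable one_ne_zero _).hasFDerivAt.comp_hasDerivAt t
    ((hasDerivAt_id t).prodMk ((hasDerivAt_const t x).prodMk (hasDerivAt_const t μ)))).deriv

theorem px_eq_fderiv (hf : ContDiff ℝ 1 (fun p : ℝ × ℝ × ℝ => f p.1 p.2.1 p.2.2)) (t x μ : ℝ) :
    px f t x μ = fderiv ℝ (fun p : ℝ × ℝ × ℝ => f p.1 p.2.1 p.2.2) (t, x, μ) (0, 1, 0) :=
  ((hf.differentiable one_ne_zero _).hasFDerivAt.comp_hasDerivAt x
    ((hasDerivAt_const x t).prodMk ((hasDerivAt_id x).prodMk (hasDerivAt_const x μ)))).deriv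

theorem hasDerivAt_pt (hf : ContDiff ℝ 1 (fun p : ℝ × ℝ × ℝ => f p.1 p.2.1 p.2.2)) (t x μ : ℝ) :
    HasDerivAt (fun s => f s x μ) (pt f t x μ) t :=
  ((hf.differentiable one_ne_zero).comp (differentiable_id.prodMk
    (differentiable_const (x, μ)))).differentiableAt.hasDerivAt

theorem hasDerivAt_px (hf : ContDiff ℝ 1 (fun p : ℝ × ℝ × ℝ => f p.1 p.2.1 p.2.2)) (t x μ : ℝ) :
    HasDerivAt (fun y => f t y μ) (px f t x μ) x :=
  ((hf.differentiable one_ne_zero).comp ((differentiable_const t).prodMk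
    (differentiable_id.prodMk (differentiable_const μ)))).differentiableAt.hasDerivAt

theorem continuous_pt (hf : ContDiff ℝ 1 (fun p : ℝ × ℝ × ℝ => f p.1 p.2.1 p.2.2)) :
    Continuous (fun p : ℝ × ℝ × ℝ => pt f p.1 p.2.1 p.2.2) :=
  ((hf.continuous_fderiv one_ne_zero).clm_apply continuous_const).congr
    fun p => (pt_eq_fderiv hf p.1 p.2.1 p.2.2).symm

theorem continuous_px (hf : ContDiff ℝ 1 (fun p : ℝ × ℝ × ℝ => f p.1 p.2.1 p.2.2)) :
    Continuous (fun p : ℝ × ℝ × ℝ => px f p.1 p.2.1 p.2.2) :=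
  ((hf.continuous_fderiv one_ne_zero).clm_apply continuous_const).congr
    fun p => (px_eq_fderiv hf p.1 p.2.1 p.2.2).symm

end PartialDerivatives

section AngularAverage

variable {f : ℝ → ℝ → ℝ → ℝ}

theorem continuous_avg (hf : Continuous (fun p : ℝ × ℝ × ℝ => f p.1 p.2.1 p.2.2)) :
    Continuous (Function.uncurry (avg f)) :=
  continuous_const.mul (intervalIntegral.continuous_parametric_intervalIntegral_of_continuous'
    (f := fun (p : ℝ × ℝ) μ => f p.1 p.2 μ) (hf.comp (continuous_fst.fst.prodMk
      (continuous_fst.snd.prodMk continuous_snd))) _ _)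

theorem hasDerivAt_avg_pt (hf : ContDiff ℝ 1 (fun p : ℝ × ℝ × ℝ => f p.1 p.2.1 p.2.2))
    (t x : ℝ) : HasDerivAt (avg f · x) (avg (pt f) t x) t :=
  (hasDerivAt_intervalIntegral_of_continuous (F := fun s μ => f s x μ)
    (F' := fun s μ => pt f s x μ)
    (hf.continuous.comp (continuous_fst.prodMk (continuous_const.prodMk continuous_snd)))
    ((continuous_pt hf).comp (continuous_fst.prodMk (continuous_const.prodMk continuous_snd)))
    (fun s μ => hasDerivAt_pt hf s x μ) (-1) 1 t).const_mul _

theorem hasDerivAt_avg_mul_px (hf : ContDiff ℝ 1 (fun p : ℝ × ℝ × ℝ => f p.1 p.2.1 p.2.2))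
    (t x : ℝ) :
    HasDerivAt (avg (fun t x μ => μ * f t x μ) t) (avg (fun t x μ => μ * px f t x μ) t x) x :=
  (hasDerivAt_intervalIntegral_of_continuous (F := fun y μ => μ * f t y μ)
    (F' := fun y μ => μ * px f t y μ)
    (continuous_snd.mul
      (hf.continuous.comp (continuous_const.prodMk (continuous_fst.prodMk continuous_snd))))
    (continuous_snd.mul
      ((continuous_px hf).comp (continuous_const.prodMk (continuous_fst.prodMk continuous_snd))))
    (fun y μ => (hasDerivAt_px hf t y μ).const_mul μ) (-1) 1 x).const_mul _

end AngularAverage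

theorem SolvesLRTE.avg_eq {ε T xL xR : ℝ} {σ α G : ℝ → ℝ} {f : ℝ → ℝ → ℝ → ℝ}
    (hsol : SolvesLRTE ε T xL xR σ α G f)
    (hf : ContDiff ℝ 1 (fun p : ℝ × ℝ × ℝ => f p.1 p.2.1 p.2.2))
    {t : ℝ} (ht : t ∈ Set.Ioo 0 T) {x : ℝ} (hx : x ∈ Set.Ioo xL xR) :
    ε ^ 2 * avg (pt f) t x + ε * avg (fun t x μ => μ * px f t x μ) t x =
      -(ε ^ 2 * α x * avg f t x) + ε ^ 2 * G x := by
  have hslice : Continuous fun μ : ℝ => (t, x, μ) :=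
    continuous_const.prodMk (continuous_const.prodMk continuous_id)
  have hfμ : Continuous (f t x ·) := hf.continuous.comp hslice
  have hptμ : Continuous (pt f t x ·) := (continuous_pt hf).comp hslice
  have hpxμ : Continuous (px f t x ·) := (continuous_px hf).comp hslice
  have hii {g : ℝ → ℝ} (hg : Continuous g) : IntervalIntegrable g volume (-1) 1 :=
    hg.intervalIntegrable _ _
  have hint : ∫ μ in (-1 : ℝ)..1, (ε ^ 2 * pt f t x μ + ε * (μ * px f t x μ)) =
      ∫ μ in (-1 : ℝ)..1, (σ x * (avg f t x - f t x μ) + ε ^ 2 * (G x - α x * f t x μ)) :=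
    intervalIntegral.integral_congr fun μ hμ => by
      rw [Set.uIcc_of_le (by norm_num)] at hμ
      linear_combination hsol t ht x hx μ hμ
  rw [intervalIntegral.integral_add (hii (by fun_prop)) (hii (by fun_prop)),
    intervalIntegral.integral_add (hii (by fun_prop)) (hii (by fun_prop)),
    intervalIntegral.integral_const_mul, intervalIntegral.integral_const_mul,
    intervalIntegral.integral_const_mul, intervalIntegral.integral_const_mul,
    intervalIntegral.integral_sub intervalIntegrable_const (hii hfμ),
    intervalIntegral.integral_sub intervalIntegrable_const (hii (by fun_prop)),
    intervalIntegral.integral_const_mul] at hint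
  simp only [avg, intervalIntegral.integral_const, smul_eq_mul] at hint ⊢
  linear_combination hint / 2

section Mass

variable {f : ℝ → ℝ → ℝ → ℝ}

theorem hasDerivAt_integral_avg (hf : ContDiff ℝ 1 (fun p : ℝ × ℝ × ℝ => f p.1 p.2.1 p.2.2))
    (a b t : ℝ) :
    HasDerivAt (fun s => ∫ x in a..b, avg f s x) (∫ x in a..b, avg (pt f) t x) t :=
  hasDerivAt_intervalIntegral_of_continuous (continuous_avg hf.continuous)
    (continuous_avg (continuous_pt hf)) (fun s x => hasDerivAt_avg_pt hf s x) a b t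

theorem integral_avg_mul_px_eq_zero
    (hf : ContDiff ℝ 1 (fun p : ℝ × ℝ × ℝ => f p.1 p.2.1 p.2.2)) {t a b : ℝ}
    (hper : ∀ μ ∈ Set.Icc (-1 : ℝ) 1, f t a μ = f t b μ) :
    ∫ x in a..b, avg (fun t x μ => μ * px f t x μ) t x = 0 := by
  have hcont : Continuous (avg (fun t x μ => μ * px f t x μ) t) :=
    (continuous_avg (f := fun t x μ => μ * px f t x μ)
      (continuous_snd.snd.mul (continuous_px hf))).comp (Continuous.prodMk_right t)
  rw [intervalIntegral.integral_eq_sub_of_hasDerivAt (fun x _ => hasDerivAt_avg_mul_px hf t x)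
    (hcont.intervalIntegrable a b), sub_eq_zero]
  refine congrArg (1 / 2 * ·) (intervalIntegral.integral_congr fun μ hμ => ?_)
  rw [Set.uIcc_of_le (by norm_num)] at hμ
  simp only [hper μ hμ]

end Mass

theorem mass_conservation_periodic_general
    (ε T xL xR : ℝ) (σ α G : ℝ → ℝ) (f : ℝ → ℝ → ℝ → ℝ)
    (hε : 0 < ε) (hD : xL < xR)
    (hα : ContDiff ℝ 1 α) (hG : ContDiff ℝ 1 G)
    (hf : ContDiff ℝ 1 (fun p : ℝ × ℝ × ℝ => f p.1 p.2.1 p.2.2))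
    (hsol : SolvesLRTE ε T xL xR σ α G f)
    (hper : ∀ t ∈ Set.Ioo (0 : ℝ) T, ∀ μ ∈ Set.Icc (-1 : ℝ) 1, f t xL μ = f t xR μ) :
    ∀ t ∈ Set.Ioo (0 : ℝ) T,
      deriv (fun s => ∫ x in xL..xR, avg f s x) t
        + (∫ x in xL..xR, α x * avg f t x) - (∫ x in xL..xR, G x) = 0 := by
  intro t ht
  have hρ : Continuous (avg f t) := (continuous_avg hf.continuous).comp (Continuous.prodMk_right t)
  have hρt : Continuous (avg (pt f) t) :=
    (continuous_avg (continuous_pt hf)).comp (Continuous.prodMk_right t)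
  have hαρ : Continuous fun x => α x * avg f t x := hα.continuous.mul hρ
  have hii {g : ℝ → ℝ} (hg : Continuous g) : IntervalIntegrable g volume xL xR :=
    hg.intervalIntegrable _ _
  rw [(hasDerivAt_integral_avg hf xL xR t).deriv]
  calc (∫ x in xL..xR, avg (pt f) t x) + (∫ x in xL..xR, α x * avg f t x) - ∫ x in xL..xR, G x
      = ∫ x in xL..xR, avg (pt f) t x + α x * avg f t x - G x := by
        rw [intervalIntegral.integral_sub (hii (by fun_prop)) (hii hG.continuous),
          intervalIntegral.integral_add (hii hρt) (hii hαρ)]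
    _ = ∫ x in xL..xR, -ε⁻¹ * avg (fun t x μ => μ * px f t x μ) t x := by
        refine intervalIntegral.integral_congr_Ioo_of_le hD.le fun x hx => ?_
        field_simp
        refine mul_left_cancel₀ hε.ne' ?_
        linear_combination hsol.avg_eq hf ht hx
    _ = 0 := by
        rw [intervalIntegral.integral_const_mul, integral_avg_mul_px_eq_zero hf (hper t ht),
          mul_zero]

/-- If `f` is continuously differentiable, satisfies the scaled 1D LRTE on
`τ × D × [-1,1]` and satisfies the periodic boundary condition
`f(t,x_L,μ) = f(t,x_R,μ)`, then the mass conservation law holds: for every `t ∈ τ`,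
`(d/dt) ∫_{x_L}^{x_R} ρ dx + ∫_{x_L}^{x_R} α ρ dx − ∫_{x_L}^{x_R} G dx = 0`. -/
theorem mass_conservation_periodic
    (ε T xL xR : ℝ) (σ α G : ℝ → ℝ) (f : ℝ → ℝ → ℝ → ℝ)
    (hε : 0 < ε) (hT : 0 < T) (hD : xL < xR)
    (hσ : ContDiff ℝ 2 σ) (hσpos : ∀ x, 0 < σ x)
    (hα : ContDiff ℝ 1 α) (hG : ContDiff ℝ 1 G)
    (hf : ContDiff ℝ 1 (fun p : ℝ × ℝ × ℝ => f p.1 p.2.1 p.2.2))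
    (hsol : SolvesLRTE ε T xL xR σ α G f)
    (hper : ∀ t ∈ Set.Ioo (0 : ℝ) T, ∀ μ ∈ Set.Icc (-1 : ℝ) 1, f t xL μ = f t xR μ) :
    ∀ t ∈ Set.Ioo (0 : ℝ) T,
      deriv (fun s => ∫ x in xL..xR, avg f s x) t
        + (∫ x in xL..xR, α x * avg f t x) - (∫ x in xL..xR, G x) = 0 :=
  mass_conservation_periodic_general ε T xL xR σ α G f hε hD hα hG hf hsol hper
end

section
/- Suppose f is three times continuously differentiable and satisfies the scaled 1D LRTE on τ × D × [-1,1]. Then for any measurable weight λ : D → ℝ, the MA-APNN governing loss evaluated at f vanishes: ∫_τ ∫_D ∫_{-1}^{1} λ(x) | ε² ∂_t f + ε μ ∂_x f − σ(x)(ρ − f) + ε² α(x) f − ε² G(x) |² dμ dx dt + ∫_τ ∫_D (1 − λ(x)) | ∂_t ρ − (1/3) ∂_x((1/σ) ∂_x ρ) + α ρ − G − ε ⟨σ 𝒜(f)⟩ − ε² ⟨σ ℬ(f)⟩ |² dx dt = 0. In particular the exact smooth solution is a zero of the MA-APNN governing loss (consistency). -/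
open MeasureTheory Real intervalIntegral

/-- The macroscopic auxiliary operator
`𝒜(f) = (1/σ) ∂_t((1/σ) μ ∂_x f) + (1/σ) μ ∂_x( (1/σ)( ∂_t f + α f − G − μ ∂_x((1/σ) μ ∂_x f) ) )`. -/
noncomputable def opA (σ α G : ℝ → ℝ) (f : ℝ → ℝ → ℝ → ℝ) : ℝ → ℝ → ℝ → ℝ :=
  fun t x μ =>
    (1 / σ x) * pt (fun t' x' μ' => (1 / σ x') * μ' * px f t' x' μ') t x μ
    + (1 / σ x) * μ *
        px (fun t' x' μ' => (1 / σ x') *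
          (pt f t' x' μ' + α x' * f t' x' μ' - G x'
            - μ' * px (fun s y ν => (1 / σ y) * ν * px f s y ν) t' x' μ')) t x μ

/-- The macroscopic auxiliary operator
`ℬ(f) = (1/σ²) ∂_t( ∂_t f + α f − G ) − (1/σ) μ ∂_x( (1/σ) μ ∂_x( (1/σ)( ∂_t f + α f − G ) ) )`. -/
noncomputable def opB (σ α G : ℝ → ℝ) (f : ℝ → ℝ → ℝ → ℝ) : ℝ → ℝ → ℝ → ℝ :=
  fun t x μ =>
    (1 / (σ x) ^ 2) * pt (fun t' x' μ' => pt f t' x' μ' + α x' * f t' x' μ' - G x') t x μ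
    - (1 / σ x) * μ *
        px (fun t' x' μ' => (1 / σ x') * μ' *
          px (fun s y ν => (1 / σ y) * (pt f s y ν + α y * f s y ν - G y)) t' x' μ') t x μ

/-!
On `τ × D` the transport equation can be solved for the source term: with `h = μ ∂ₓf / σ`
(`streamTerm`) and `g = (∂ₜf + αf - G) / σ` (`sourceTerm`) it says `f = ρ - ε h - ε² g`.
Hence, locally in `(t, x)`, `g = (ρ - f - ε h) / ε²`, so the derivatives of `g` that enter `𝒜`
and `ℬ` (including `∂ₓ(σ⁻¹ μ ∂ₓ g)`, which need not exist for `α, G ∈ C¹`) are expressed through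
derivatives of `ρ`, `f` and `h`. After this substitution, and using the equation once more,
`ε σ𝒜 + ε² σℬ` becomes, for each `(t, x)`, a quadratic polynomial in `μ` plus a multiple of `f`.
By `⟨μ⟩ = 0`, `⟨μ²⟩ = 1/3` and `⟨f⟩ = ρ` its angular average is exactly
`∂ₜρ - (1/3) ∂ₓ(σ⁻¹ ∂ₓρ) + αρ - G`. So both residuals of the loss vanish on `τ × D`, and the
loss is `0` for every weight.
-/

open Set Filter Function Metric

theorem hasDerivAt_intervalIntegral_of_continuous_s13 {Φ Φ' : ℝ → ℝ → ℝ} {a b x₀ : ℝ}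
    (hΦ : Continuous ↿Φ) (hΦ' : Continuous ↿Φ')
    (hderiv : ∀ x μ, HasDerivAt (Φ · μ) (Φ' x μ) x) :
    HasDerivAt (fun x => ∫ μ in a..b, Φ x μ) (∫ μ in a..b, Φ' x₀ μ) x₀ := by
  obtain ⟨C, hC⟩ := ((isCompact_closedBall x₀ 1).prod isCompact_uIcc).exists_bound_of_continuousOn
    hΦ'.continuousOn
  exact (hasDerivAt_integral_of_dominated_loc_of_deriv_le (bound := fun _ => C)
    (ball_mem_nhds x₀ one_pos)
    (.of_forall fun x => (hΦ.comp (Continuous.prodMk_right x)).aestronglyMeasurable)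
    ((hΦ.comp (Continuous.prodMk_right x₀)).intervalIntegrable _ _)
    (hΦ'.comp (Continuous.prodMk_right x₀)).aestronglyMeasurable
    (.of_forall fun μ hμ x hx => hC (x, μ) ⟨ball_subset_closedBall hx, uIoc_subset_uIcc hμ⟩)
    intervalIntegrable_const (.of_forall fun μ _ x _ => hderiv x μ)).2

theorem avg_linear_combination_eq {A B φ : ℝ → ℝ} {a b c₀ c₁ c₂ c₃ : ℝ}
    (hA : IntervalIntegrable A volume (-1) 1) (hB : IntervalIntegrable B volume (-1) 1)
    (hφ : IntervalIntegrable φ volume (-1) 1)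
    (h : EqOn (fun μ => a * A μ + b * B μ) (fun μ => c₀ + c₁ * μ - c₂ * μ ^ 2 + c₃ * φ μ)
      (Icc (-1) 1)) :
    a * (1 / 2 * ∫ μ in (-1 : ℝ)..1, A μ) + b * (1 / 2 * ∫ μ in (-1 : ℝ)..1, B μ)
      = c₀ - c₂ / 3 + c₃ * (1 / 2 * ∫ μ in (-1 : ℝ)..1, φ μ) := by
  have hpoly : ∫ μ in (-1 : ℝ)..1, (c₀ + c₁ * μ - c₂ * μ ^ 2) = 2 * c₀ - 2 / 3 * c₂ := by
    rw [integral_sub (Continuous.intervalIntegrable (by fun_prop) _ _)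
        (Continuous.intervalIntegrable (by fun_prop) _ _),
      integral_add intervalIntegrable_const (Continuous.intervalIntegrable (by fun_prop) _ _),
      intervalIntegral.integral_const_mul, intervalIntegral.integral_const_mul, integral_id,
      integral_pow]
    norm_num
    ring
  calc _ = 1 / 2 * ∫ μ in (-1 : ℝ)..1, (a * A μ + b * B μ) := by
        rw [integral_add (hA.const_mul a) (hB.const_mul b), intervalIntegral.integral_const_mul,
          intervalIntegral.integral_const_mul]
        ring
    _ = 1 / 2 * ∫ μ in (-1 : ℝ)..1, ((c₀ + c₁ * μ - c₂ * μ ^ 2) + c₃ * φ μ) := by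
        rw [integral_congr (by rwa [uIcc_of_le (by norm_num : (-1 : ℝ) ≤ 1)])]
    _ = _ := by
        rw [integral_add (Continuous.intervalIntegrable (by fun_prop) _ _) (hφ.const_mul c₃),
          intervalIntegral.integral_const_mul, hpoly]
        ring

theorem integral_integral_eq_zero_of_forall_mem_Ioo {φ : ℝ → ℝ → ℝ} {a b c d : ℝ}
    (hab : a ≤ b) (hcd : c ≤ d) (h : ∀ t ∈ Ioo a b, ∀ x ∈ Ioo c d, φ t x = 0) :
    ∫ t in a..b, ∫ x in c..d, φ t x = 0 :=
  (integral_congr_Ioo_of_le hab fun t ht =>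
    (integral_congr_Ioo_of_le hcd fun x hx => h t ht x hx).trans integral_zero).trans integral_zero

section PartialDerivatives

variable {F : ℝ → ℝ → ℝ → ℝ} {t x μ : ℝ}

theorem hasDerivAt_fderiv_apply_t (hF : DifferentiableAt ℝ ↿F (t, x, μ)) :
    HasDerivAt (fun s => F s x μ) (fderiv ℝ ↿F (t, x, μ) (1, 0, 0)) t :=
  (hF.hasFDerivAt.comp_hasDerivAt t
    ((hasDerivAt_id t).prodMk ((hasDerivAt_const t x).prodMk (hasDerivAt_const t μ))) :)

theorem hasDerivAt_fderiv_apply_x (hF : DifferentiableAt ℝ ↿F (t, x, μ)) :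
    HasDerivAt (fun y => F t y μ) (fderiv ℝ ↿F (t, x, μ) (0, 1, 0)) x :=
  (hF.hasFDerivAt.comp_hasDerivAt x
    ((hasDerivAt_const x t).prodMk ((hasDerivAt_id x).prodMk (hasDerivAt_const x μ))) :)

theorem hasDerivAt_pt_s13 (hF : Differentiable ℝ ↿F) (t x μ : ℝ) :
    HasDerivAt (fun s => F s x μ) (pt F t x μ) t := by
  have h := hasDerivAt_fderiv_apply_t (hF (t, x, μ))
  rwa [pt, h.deriv]

theorem hasDerivAt_px_s13 (hF : Differentiable ℝ ↿F) (t x μ : ℝ) :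
    HasDerivAt (fun y => F t y μ) (px F t x μ) x := by
  have h := hasDerivAt_fderiv_apply_x (hF (t, x, μ))
  rwa [px, h.deriv]

variable {m n : WithTop ℕ∞}

theorem ContDiff.uncurry_pt (hF : ContDiff ℝ n ↿F) (hmn : m + 1 ≤ n) : ContDiff ℝ m ↿(pt F) := by
  have hdiff : Differentiable ℝ ↿F :=
    (hF.of_le (le_trans le_add_self hmn)).differentiable one_ne_zero
  have hpt : ↿(pt F) = fun p => fderiv ℝ ↿F p (1, 0, 0) :=
    funext fun p => (hasDerivAt_fderiv_apply_t (hdiff p)).deriv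
  exact hpt ▸ (hF.fderiv_right hmn).clm_apply contDiff_const

theorem ContDiff.uncurry_px (hF : ContDiff ℝ n ↿F) (hmn : m + 1 ≤ n) : ContDiff ℝ m ↿(px F) := by
  have hdiff : Differentiable ℝ ↿F :=
    (hF.of_le (le_trans le_add_self hmn)).differentiable one_ne_zero
  have hpx : ↿(px F) = fun p => fderiv ℝ ↿F p (0, 1, 0) :=
    funext fun p => (hasDerivAt_fderiv_apply_x (hdiff p)).deriv
  exact hpx ▸ (hF.fderiv_right hmn).clm_apply contDiff_const

theorem Continuous.uncurry_apply (hF : Continuous ↿F) (t x : ℝ) : Continuous (F t x) :=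
  hF.comp (continuous_const.prodMk (continuous_const.prodMk continuous_id))

theorem hasDerivAt_avg_t (hF : ContDiff ℝ 1 ↿F) (t x : ℝ) :
    HasDerivAt (fun s => avg F s x) (avg (pt F) t x) t :=
  (hasDerivAt_intervalIntegral_of_continuous_s13 (Φ := fun s μ => F s x μ)
    (hF.continuous.comp (continuous_fst.prodMk (continuous_const.prodMk continuous_snd)))
    ((hF.uncurry_pt (m := 0) (by norm_num)).continuous.comp
      (continuous_fst.prodMk (continuous_const.prodMk continuous_snd)))
    fun s μ => hasDerivAt_pt_s13 (hF.differentiable one_ne_zero) s x μ).const_mul _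

theorem hasDerivAt_avg_x (hF : ContDiff ℝ 1 ↿F) (t x : ℝ) :
    HasDerivAt (fun y => avg F t y) (avg (px F) t x) x :=
  (hasDerivAt_intervalIntegral_of_continuous_s13 (Φ := fun y μ => F t y μ)
    (hF.continuous.comp (continuous_const.prodMk (continuous_fst.prodMk continuous_snd)))
    ((hF.uncurry_px (m := 0) (by norm_num)).continuous.comp
      (continuous_const.prodMk (continuous_fst.prodMk continuous_snd)))
    fun y μ => hasDerivAt_px_s13 (hF.differentiable one_ne_zero) t y μ).const_mul _

end PartialDerivatives

noncomputable def streamTerm (σ : ℝ → ℝ) (f : ℝ → ℝ → ℝ → ℝ) : ℝ → ℝ → ℝ → ℝ :=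
  fun t x μ => 1 / σ x * μ * px f t x μ

noncomputable def sourceTerm (σ α G : ℝ → ℝ) (f : ℝ → ℝ → ℝ → ℝ) : ℝ → ℝ → ℝ → ℝ :=
  fun t x μ => 1 / σ x * (pt f t x μ + α x * f t x μ - G x)

section TransportTerms

variable {ε T xL xR t x μ : ℝ} {σ α G : ℝ → ℝ} {f : ℝ → ℝ → ℝ → ℝ}

theorem ContDiff.one_div {n : WithTop ℕ∞} (hσ : ContDiff ℝ n σ) (hσ0 : ∀ x, σ x ≠ 0) :
    ContDiff ℝ n fun x => 1 / σ x :=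
  contDiff_const.div hσ hσ0

theorem ContDiff.uncurry_streamTerm {n : WithTop ℕ∞} (hσ : ContDiff ℝ n σ) (hσ0 : ∀ x, σ x ≠ 0)
    (hf : ContDiff ℝ (n + 1) ↿f) : ContDiff ℝ n ↿(streamTerm σ f) :=
  (((hσ.one_div hσ0).comp (contDiff_fst.comp contDiff_snd)).mul
    (contDiff_snd.comp contDiff_snd)).mul (hf.uncurry_px le_rfl)

theorem hasDerivAt_streamTerm_x (hσ : DifferentiableAt ℝ (fun y => 1 / σ y) x)
    (hf : Differentiable ℝ ↿(px f)) :
    HasDerivAt (fun y => streamTerm σ f t y μ)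
      (μ * (deriv (fun y => 1 / σ y) x * px f t x μ + 1 / σ x * px (px f) t x μ)) x :=
  ((hσ.hasDerivAt.mul_const μ).fun_mul (hasDerivAt_px_s13 hf t x μ)).congr_deriv (by ring)

theorem opA_eq {gx : ℝ} (hg : HasDerivAt (fun y => sourceTerm σ α G f t y μ) gx x)
    (hσ : DifferentiableAt ℝ (fun y => 1 / σ y) x) (hσ0 : σ x ≠ 0)
    (hh : Differentiable ℝ ↿(px (streamTerm σ f))) :
    σ x * opA σ α G f t x μ = pt (streamTerm σ f) t x μ + μ * (gx - μ *
      (deriv (fun y => 1 / σ y) x * px (streamTerm σ f) t x μ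
        + 1 / σ x * px (px (streamTerm σ f)) t x μ)) := by
  have hk := hg.fun_sub ((hσ.hasDerivAt.mul_const μ).fun_mul (hasDerivAt_px_s13 hh t x μ))
  have hpx : px (fun t' x' μ' => 1 / σ x' * (pt f t' x' μ' + α x' * f t' x' μ' - G x'
      - μ' * px (streamTerm σ f) t' x' μ')) t x μ
      = gx - (deriv (fun y => 1 / σ y) x * μ * px (streamTerm σ f) t x μ
        + 1 / σ x * μ * px (px (streamTerm σ f)) t x μ) := by
    refine HasDerivAt.deriv (hk.congr_of_eventuallyEq (.of_forall fun y => ?_))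
    simp only [sourceTerm]
    ring
  change σ x * (1 / σ x * pt (streamTerm σ f) t x μ + 1 / σ x * μ *
    px (fun t' x' μ' => 1 / σ x' * (pt f t' x' μ' + α x' * f t' x' μ' - G x'
      - μ' * px (streamTerm σ f) t' x' μ')) t x μ) = _
  rw [hpx]
  field_simp

theorem opB_eq {gx' : ℝ}
    (hg : HasDerivAt (fun y => 1 / σ y * μ * px (sourceTerm σ α G f) t y μ) gx' x)
    (hσ0 : σ x ≠ 0) :
    σ x * opB σ α G f t x μ = pt (sourceTerm σ α G f) t x μ - μ * gx' := by
  change σ x * (1 / σ x ^ 2 * deriv (fun s => pt f s x μ + α x * f s x μ - G x) t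
    - 1 / σ x * μ * px (fun t y μ => 1 / σ y * μ * px (sourceTerm σ α G f) t y μ) t x μ) = _
  rw [px, hg.deriv]
  simp only [pt, sourceTerm, deriv_const_mul_field]
  field_simp

namespace SolvesLRTE

theorem residual_eq_zero (hsol : SolvesLRTE ε T xL xR σ α G f)
    (ht : t ∈ Ioo 0 T) (hx : x ∈ Ioo xL xR) (hμ : μ ∈ Icc (-1) 1) :
    ε ^ 2 * pt f t x μ + ε * μ * px f t x μ - σ x * (avg f t x - f t x μ)
      + ε ^ 2 * α x * f t x μ - ε ^ 2 * G x = 0 := by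
  linear_combination hsol t ht x hx μ hμ

theorem sourceTerm_eq (hsol : SolvesLRTE ε T xL xR σ α G f) (hε : ε ≠ 0) (hσ0 : σ x ≠ 0)
    (ht : t ∈ Ioo 0 T) (hx : x ∈ Ioo xL xR) (hμ : μ ∈ Icc (-1) 1) :
    sourceTerm σ α G f t x μ = (avg f t x - f t x μ - ε * streamTerm σ f t x μ) / ε ^ 2 := by
  have h := hsol t ht x hx μ hμ
  simp only [sourceTerm, streamTerm]
  field_simp
  linear_combination h

theorem hasDerivAt_sourceTerm_t (hsol : SolvesLRTE ε T xL xR σ α G f) (hε : ε ≠ 0)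
    (hσ0 : σ x ≠ 0) (hf : Differentiable ℝ ↿f) (hh : Differentiable ℝ ↿(streamTerm σ f))
    {ρt : ℝ} (hρ : HasDerivAt (fun s => avg f s x) ρt t)
    (ht : t ∈ Ioo 0 T) (hx : x ∈ Ioo xL xR) (hμ : μ ∈ Icc (-1) 1) :
    HasDerivAt (fun s => sourceTerm σ α G f s x μ)
      ((ρt - pt f t x μ - ε * pt (streamTerm σ f) t x μ) / ε ^ 2) t :=
  (((hρ.fun_sub (hasDerivAt_pt_s13 hf t x μ)).fun_sub
    ((hasDerivAt_pt_s13 hh t x μ).const_mul ε)).div_const _).congr_of_eventuallyEq <|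
      eventually_of_mem (Ioo_mem_nhds ht.1 ht.2) fun _ hs => hsol.sourceTerm_eq hε hσ0 hs hx hμ

theorem hasDerivAt_sourceTerm_x (hsol : SolvesLRTE ε T xL xR σ α G f) (hε : ε ≠ 0)
    (hσ0 : ∀ x, σ x ≠ 0) (hf : Differentiable ℝ ↿f) (hh : Differentiable ℝ ↿(streamTerm σ f))
    {ρx : ℝ} (hρ : HasDerivAt (fun y => avg f t y) ρx x)
    (ht : t ∈ Ioo 0 T) (hx : x ∈ Ioo xL xR) (hμ : μ ∈ Icc (-1) 1) :
    HasDerivAt (fun y => sourceTerm σ α G f t y μ)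
      ((ρx - px f t x μ - ε * px (streamTerm σ f) t x μ) / ε ^ 2) x :=
  (((hρ.fun_sub (hasDerivAt_px_s13 hf t x μ)).fun_sub
    ((hasDerivAt_px_s13 hh t x μ).const_mul ε)).div_const _).congr_of_eventuallyEq <|
      eventually_of_mem (Ioo_mem_nhds hx.1 hx.2) fun _ hy => hsol.sourceTerm_eq hε (hσ0 _) ht hy hμ

theorem hasDerivAt_weighted_px_sourceTerm (hsol : SolvesLRTE ε T xL xR σ α G f) (hε : ε ≠ 0)
    (hσ : ContDiff ℝ 2 σ) (hσ0 : ∀ x, σ x ≠ 0) (hf : ContDiff ℝ 3 ↿f)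
    (ht : t ∈ Ioo 0 T) (hx : x ∈ Ioo xL xR) (hμ : μ ∈ Icc (-1) 1) :
    HasDerivAt (fun y => 1 / σ y * μ * px (sourceTerm σ α G f) t y μ)
      (μ * (deriv (fun y => 1 / σ y) x *
          ((avg (px f) t x - px f t x μ - ε * px (streamTerm σ f) t x μ) / ε ^ 2)
        + 1 / σ x * ((avg (px (px f)) t x - px (px f) t x μ
          - ε * px (px (streamTerm σ f)) t x μ) / ε ^ 2))) x := by
  have hfx : ContDiff ℝ 2 ↿(px f) := hf.uncurry_px (by norm_num)
  have hh : ContDiff ℝ 2 ↿(streamTerm σ f) := hσ.uncurry_streamTerm hσ0 hf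
  have hD := ((hasDerivAt_avg_x (hfx.of_le (by norm_num)) t x).fun_sub
    (hasDerivAt_px_s13 (hfx.differentiable (by norm_num)) t x μ)).fun_sub
    ((hasDerivAt_px_s13 ((hh.uncurry_px (m := 1) (by norm_num)).differentiable (by norm_num))
      t x μ).const_mul ε) |>.div_const (ε ^ 2)
  have hs := ((hσ.one_div hσ0).differentiable (by norm_num) x).hasDerivAt
  refine ((hs.mul_const μ).fun_mul hD).congr_deriv (by ring) |>.congr_of_eventuallyEq ?_
  filter_upwards [Ioo_mem_nhds hx.1 hx.2] with y hy
  rw [px, (hsol.hasDerivAt_sourceTerm_x hε hσ0 (hf.differentiable (by norm_num))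
    (hh.differentiable (by norm_num)) (hasDerivAt_avg_x (hf.of_le (by norm_num)) t y)
    ht hy hμ).deriv]

section Domain

variable (hsol : SolvesLRTE ε T xL xR σ α G f) (hε : ε ≠ 0) (hσ : ContDiff ℝ 2 σ)
  (hσ0 : ∀ x, σ x ≠ 0) (hf : ContDiff ℝ 3 ↿f) (ht : t ∈ Ioo 0 T) (hx : x ∈ Ioo xL xR)
include hsol hε hσ hσ0 hf ht hx

theorem opA_eqOn : EqOn (fun μ => σ x * opA σ α G f t x μ)
    (fun μ => pt (streamTerm σ f) t x μ + μ *
      ((avg (px f) t x - px f t x μ - ε * px (streamTerm σ f) t x μ) / ε ^ 2 - μ *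
        (deriv (fun y => 1 / σ y) x * px (streamTerm σ f) t x μ
          + 1 / σ x * px (px (streamTerm σ f)) t x μ))) (Icc (-1) 1) := fun μ hμ => by
  have hh : ContDiff ℝ 2 ↿(streamTerm σ f) := hσ.uncurry_streamTerm hσ0 hf
  exact opA_eq (hsol.hasDerivAt_sourceTerm_x hε hσ0 (hf.differentiable (by norm_num))
      (hh.differentiable (by norm_num)) (hasDerivAt_avg_x (hf.of_le (by norm_num)) t x) ht hx hμ)
    ((hσ.one_div hσ0).differentiable (by norm_num) x) (hσ0 x)
    ((hh.uncurry_px (m := 1) (by norm_num)).differentiable (by norm_num))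

theorem opB_eqOn : EqOn (fun μ => σ x * opB σ α G f t x μ)
    (fun μ => (deriv (fun s => avg f s x) t - pt f t x μ - ε * pt (streamTerm σ f) t x μ) / ε ^ 2
      - μ * (μ * (deriv (fun y => 1 / σ y) x *
          ((avg (px f) t x - px f t x μ - ε * px (streamTerm σ f) t x μ) / ε ^ 2)
        + 1 / σ x * ((avg (px (px f)) t x - px (px f) t x μ
          - ε * px (px (streamTerm σ f)) t x μ) / ε ^ 2)))) (Icc (-1) 1) := fun μ hμ => by
  have hh : ContDiff ℝ 2 ↿(streamTerm σ f) := hσ.uncurry_streamTerm hσ0 hf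
  have hpt : pt (sourceTerm σ α G f) t x μ = _ :=
    (hsol.hasDerivAt_sourceTerm_t hε (hσ0 x) (hf.differentiable (by norm_num))
      (hh.differentiable (by norm_num))
      (hasDerivAt_avg_t (hf.of_le (by norm_num)) t x).differentiableAt.hasDerivAt ht hx hμ).deriv
  dsimp only
  rw [opB_eq (hsol.hasDerivAt_weighted_px_sourceTerm hε hσ hσ0 hf ht hx hμ) (hσ0 x), hpt]

theorem continuousOn_opA : ContinuousOn (fun μ => σ x * opA σ α G f t x μ) (Icc (-1) 1) := by
  refine ContinuousOn.congr ?_ (hsol.opA_eqOn hε hσ hσ0 hf ht hx)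
  have hh : ContDiff ℝ 2 ↿(streamTerm σ f) := hσ.uncurry_streamTerm hσ0 hf
  have hhx : ContDiff ℝ 1 ↿(px (streamTerm σ f)) := hh.uncurry_px (by norm_num)
  have hpth := (hh.uncurry_pt (m := 1) (by norm_num)).continuous.uncurry_apply t x
  have hpxh := hhx.continuous.uncurry_apply t x
  have hpxxh := (hhx.uncurry_px (m := 0) (by norm_num)).continuous.uncurry_apply t x
  have hpxf := (hf.uncurry_px (m := 2) (by norm_num)).continuous.uncurry_apply t x
  fun_prop

theorem continuousOn_opB : ContinuousOn (fun μ => σ x * opB σ α G f t x μ) (Icc (-1) 1) := by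
  refine ContinuousOn.congr ?_ (hsol.opB_eqOn hε hσ hσ0 hf ht hx)
  have hh : ContDiff ℝ 2 ↿(streamTerm σ f) := hσ.uncurry_streamTerm hσ0 hf
  have hhx : ContDiff ℝ 1 ↿(px (streamTerm σ f)) := hh.uncurry_px (by norm_num)
  have hfx : ContDiff ℝ 2 ↿(px f) := hf.uncurry_px (by norm_num)
  have hptf := (hf.uncurry_pt (m := 2) (by norm_num)).continuous.uncurry_apply t x
  have hpth := (hh.uncurry_pt (m := 1) (by norm_num)).continuous.uncurry_apply t x
  have hpxh := hhx.continuous.uncurry_apply t x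
  have hpxxh := (hhx.uncurry_px (m := 0) (by norm_num)).continuous.uncurry_apply t x
  have hpxf := hfx.continuous.uncurry_apply t x
  have hpxxf := (hfx.uncurry_px (m := 1) (by norm_num)).continuous.uncurry_apply t x
  fun_prop

theorem opA_opB_combination (hμ : μ ∈ Icc (-1) 1) :
    ε * (σ x * opA σ α G f t x μ) + ε ^ 2 * (σ x * opB σ α G f t x μ) =
      (deriv (fun s => avg f s x) t - G x - σ x / ε ^ 2 * avg f t x) + avg (px f) t x / ε * μ
        - (deriv (fun y => 1 / σ y) x * avg (px f) t x + 1 / σ x * avg (px (px f)) t x) * μ ^ 2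
        + (α x + σ x / ε ^ 2) * f t x μ := by
  have hA := hsol.opA_eqOn hε hσ hσ0 hf ht hx hμ
  have hB := hsol.opB_eqOn hε hσ hσ0 hf ht hx hμ
  have hpx : px (streamTerm σ f) t x μ = _ :=
    (hasDerivAt_streamTerm_x ((hσ.one_div hσ0).differentiable (by norm_num) x)
      ((hf.uncurry_px (m := 2) (by norm_num)).differentiable (by norm_num))).deriv
  dsimp only at hA hB
  rw [hA, hB, hpx]
  have hlrte := hsol t ht x hx μ hμ
  have hσx := hσ0 x
  field_simp
  linear_combination -σ x * hlrte

theorem macroscopic_residual_eq_zero :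
    deriv (fun s => avg f s x) t
      - (1 / 3) * deriv (fun y => (1 / σ y) * deriv (fun y' => avg f t y') y) x
      + α x * avg f t x - G x
      - ε * ((1 / 2) * ∫ μ in (-1 : ℝ)..1, σ x * opA σ α G f t x μ)
      - ε ^ 2 * ((1 / 2) * ∫ μ in (-1 : ℝ)..1, σ x * opB σ α G f t x μ) = 0 := by
  have hρx : deriv (fun y => avg f t y) = avg (px f) t :=
    funext fun y => (hasDerivAt_avg_x (hf.of_le (by norm_num)) t y).deriv
  have hflux : deriv (fun y => 1 / σ y * deriv (fun y' => avg f t y') y) x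
      = deriv (fun y => 1 / σ y) x * avg (px f) t x + 1 / σ x * avg (px (px f)) t x := by
    rw [hρx]
    exact (((hσ.one_div hσ0).differentiable (by norm_num) x).hasDerivAt.fun_mul
      (hasDerivAt_avg_x (hf.uncurry_px (m := 1) (by norm_num)) t x)).deriv
  have key := avg_linear_combination_eq
    ((hsol.continuousOn_opA hε hσ hσ0 hf ht hx).intervalIntegrable_of_Icc (by norm_num))
    ((hsol.continuousOn_opB hε hσ hσ0 hf ht hx).intervalIntegrable_of_Icc (by norm_num))
    ((hf.continuous.uncurry_apply t x).intervalIntegrable _ _)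
    fun μ hμ => hsol.opA_opB_combination hε hσ hσ0 hf ht hx hμ
  have havg : avg f t x = 1 / 2 * ∫ μ in (-1 : ℝ)..1, f t x μ := rfl
  rw [hflux]
  linear_combination -key + (α x + σ x / ε ^ 2) * havg

end Domain

end SolvesLRTE

end TransportTerms

theorem MAAPNN_loss_consistency_general
    (ε T xL xR : ℝ) (σ α G : ℝ → ℝ) (f : ℝ → ℝ → ℝ → ℝ) (lam : ℝ → ℝ)
    (hε : 0 < ε) (hT : 0 < T) (hD : xL < xR)
    (hσ : ContDiff ℝ 2 σ) (hσpos : ∀ x, 0 < σ x)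
    (hf : ContDiff ℝ 3 (fun p : ℝ × ℝ × ℝ => f p.1 p.2.1 p.2.2))
    (hsol : SolvesLRTE ε T xL xR σ α G f) :
    (∫ t in (0 : ℝ)..T, ∫ x in xL..xR, ∫ μ in (-1 : ℝ)..1,
        lam x *
          |ε ^ 2 * pt f t x μ + ε * μ * px f t x μ - σ x * (avg f t x - f t x μ)
            + ε ^ 2 * α x * f t x μ - ε ^ 2 * G x| ^ 2)
      + (∫ t in (0 : ℝ)..T, ∫ x in xL..xR,
          (1 - lam x) *
            |deriv (fun s => avg f s x) t
              - (1 / 3) * deriv (fun y => (1 / σ y) * deriv (fun y' => avg f t y') y) x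
              + α x * avg f t x - G x
              - ε * ((1 / 2) * ∫ μ in (-1 : ℝ)..1, σ x * opA σ α G f t x μ)
              - ε ^ 2 * ((1 / 2) * ∫ μ in (-1 : ℝ)..1, σ x * opB σ α G f t x μ)| ^ 2)
      = 0 := by
  have hσ0 : ∀ x, σ x ≠ 0 := fun x => (hσpos x).ne'
  rw [integral_integral_eq_zero_of_forall_mem_Ioo hT.le hD.le fun t ht x hx =>
      (integral_congr fun μ hμ => by
        simp [hsol.residual_eq_zero ht hx (uIcc_of_le (by norm_num : (-1 : ℝ) ≤ 1) ▸ hμ)]).trans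
        integral_zero,
    integral_integral_eq_zero_of_forall_mem_Ioo hT.le hD.le fun t ht x hx => by
      rw [hsol.macroscopic_residual_eq_zero hε.ne' hσ hσ0 hf ht hx]; norm_num]
  norm_num

/-- Consistency of the MA-APNN governing loss: if `f` is three times continuously
differentiable and satisfies the scaled 1D LRTE on `τ × D × [-1,1]`, then for any
measurable weight `λ : D → ℝ` the MA-APNN governing loss evaluated at `f` vanishes. -/
theorem MAAPNN_loss_consistency
    (ε T xL xR : ℝ) (σ α G : ℝ → ℝ) (f : ℝ → ℝ → ℝ → ℝ) (lam : ℝ → ℝ)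
    (hε : 0 < ε) (hT : 0 < T) (hD : xL < xR)
    (hσ : ContDiff ℝ 2 σ) (hσpos : ∀ x, 0 < σ x)
    (hα : ContDiff ℝ 1 α) (hG : ContDiff ℝ 1 G)
    (hf : ContDiff ℝ 3 (fun p : ℝ × ℝ × ℝ => f p.1 p.2.1 p.2.2))
    (hsol : SolvesLRTE ε T xL xR σ α G f)
    (hlam : Measurable lam) :
    (∫ t in (0 : ℝ)..T, ∫ x in xL..xR, ∫ μ in (-1 : ℝ)..1,
        lam x *
          |ε ^ 2 * pt f t x μ + ε * μ * px f t x μ - σ x * (avg f t x - f t x μ)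
            + ε ^ 2 * α x * f t x μ - ε ^ 2 * G x| ^ 2)
      + (∫ t in (0 : ℝ)..T, ∫ x in xL..xR,
          (1 - lam x) *
            |deriv (fun s => avg f s x) t
              - (1 / 3) * deriv (fun y => (1 / σ y) * deriv (fun y' => avg f t y') y) x
              + α x * avg f t x - G x
              - ε * ((1 / 2) * ∫ μ in (-1 : ℝ)..1, σ x * opA σ α G f t x μ)
              - ε ^ 2 * ((1 / 2) * ∫ μ in (-1 : ℝ)..1, σ x * opB σ α G f t x μ)| ^ 2)
      = 0 :=
  MAAPNN_loss_consistency_general ε T xL xR σ α G f lam hε hT hD hσ hσpos hf hsol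
end
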